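/- arXiv:1110.6261 — 5 statements merged into one kernel-verified Lean document; each statement's English description precedes it below -/
import Mathlib

section
/- Let A be an m-order n-dimensional essentially nonnegative tensor. Assume that for every nonnegative tensor B, the spectral radius ρ(B) is an eigenvalue of B with a nonzero nonnegative eigenvector. Then A has a real eigenvalue λ(A) with a nonzero nonnegative eigenvector such that λ(A) ≥ Re(λ) for every complex eigenvalue λ of A; moreover λ(A) = ρ(αI + A) − α for any α > 0 such that αI + A is nonnegative. -/
open Finset

/-- An `(m+1)`-order, `n`-dimensional real tensor. -/
abbrev Tensor (m n : ℕ) := (Fin (m + 1) → Fin n) → ℝ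

/-- `(A x^{m-1})_i` over ℂ. -/
noncomputable def tApplyC {m n : ℕ} (T : Tensor m n) (x : Fin n → ℂ) (i : Fin n) : ℂ :=
  ∑ j : Fin m → Fin n, (T (Fin.cons i j) : ℂ) * ∏ k, x (j k)

/-- `(A x^{m-1})_i` over ℝ. -/
noncomputable def tApply {m n : ℕ} (T : Tensor m n) (x : Fin n → ℝ) (i : Fin n) : ℝ :=
  ∑ j : Fin m → Fin n, T (Fin.cons i j) * ∏ k, x (j k)

/-- eigenvalue of a tensor -/
def IsEig {m n : ℕ} (T : Tensor m n) (lam : ℂ) : Prop :=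
  ∃ x : Fin n → ℂ, x ≠ 0 ∧ ∀ i, tApplyC T x i = lam * (x i) ^ m

/-- spectral radius -/
noncomputable def specRad {m n : ℕ} (T : Tensor m n) : ℝ :=
  sSup {r : ℝ | ∃ lam : ℂ, IsEig T lam ∧ ‖lam‖ = r}

/-- the unit tensor -/
def unitT (m n : ℕ) : Tensor m n := fun idx => if ∀ k, idx k = idx 0 then 1 else 0

def TNonneg {m n : ℕ} (T : Tensor m n) : Prop := ∀ idx, 0 ≤ T idx

def TEssNonneg {m n : ℕ} (T : Tensor m n) : Prop :=
  ∀ idx, (¬ ∀ k, idx k = idx 0) → 0 ≤ T idx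

def TDiagonal {m n : ℕ} (T : Tensor m n) : Prop :=
  ∀ idx, (¬ ∀ k, idx k = idx 0) → T idx = 0

def TReducible {m n : ℕ} (T : Tensor m n) : Prop :=
  ∃ S : Finset (Fin n), S.Nonempty ∧ S ≠ Finset.univ ∧
    ∀ i ∈ S, ∀ j : Fin m → Fin n, (∀ k, j k ∉ S) → T (Fin.cons i j) = 0

def TIrreducible {m n : ℕ} (T : Tensor m n) : Prop := ¬ TReducible T

def TSymmetric {m n : ℕ} (T : Tensor m n) : Prop :=
  ∀ (σ : Equiv.Perm (Fin (m + 1))) (idx : Fin (m + 1) → Fin n), T (idx ∘ σ) = T idx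

/-- shift making a tensor nonnegative -/
noncomputable def shiftAlpha {m n : ℕ} (T : Tensor m n) : ℝ :=
  (∑ i : Fin n, |T (fun _ => i)|) + 1

/-- dominant eigenvalue of an essentially nonnegative tensor -/
noncomputable def domEig {m n : ℕ} (T : Tensor m n) : ℝ :=
  specRad (fun idx => T idx + shiftAlpha T * unitT m n idx) - shiftAlpha T

/-- homogeneous form `T x^m` -/
noncomputable def tForm {m n : ℕ} (T : Tensor m n) (x : Fin n → ℝ) : ℝ :=
  ∑ idx : Fin (m + 1) → Fin n, T idx * ∏ k, x (idx k)

/-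
Shifting by the unit tensor shifts every eigenvalue by the same amount and keeps the
eigenvectors. For `α` large the shifted tensor `αI + A` is nonnegative, so by the assumed
Perron–Frobenius property `ρ(αI + A)` is an eigenvalue with a nonnegative eigenvector, and
`λ := ρ(αI + A) - α` is an eigenvalue of `A` with that eigenvector. For any eigenvalue `μ` of `A`,
`μ + α` is an eigenvalue of `αI + A`, whence `Re μ + α ≤ |μ + α| ≤ ρ(αI + A)`. Two numbers with
these two properties dominate each other, so `λ` does not depend on the admissible shift `α`.
-/

def shiftT {m n : ℕ} (α : ℝ) (T : Tensor m n) : Tensor m n :=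
  fun idx => α * unitT m n idx + T idx

lemma unitT_cons {m n : ℕ} (i : Fin n) (j : Fin m → Fin n) :
    unitT m n (Fin.cons i j) = if j = (fun _ => i) then 1 else 0 := by
  refine if_congr ?_ rfl rfl
  simp only [Fin.cons_zero]
  constructor
  · intro h
    funext k
    simpa [Fin.cons_succ] using h k.succ
  · rintro rfl k
    cases k using Fin.cases <;> simp

lemma tApplyC_shiftT {m n : ℕ} (α : ℝ) (T : Tensor m n) (x : Fin n → ℂ) (i : Fin n) :
    tApplyC (shiftT α T) x i = α * x i ^ m + tApplyC T x i := by
  have hsummand : ∀ j : Fin m → Fin n,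
      (shiftT α T (Fin.cons i j) : ℂ) * ∏ k, x (j k)
        = (if j = (fun _ => i) then (α : ℂ) * ∏ k, x (j k) else 0)
          + (T (Fin.cons i j) : ℂ) * ∏ k, x (j k) := by
    intro j
    rw [shiftT, unitT_cons]
    split_ifs <;> push_cast <;> ring
  simp only [tApplyC, hsummand, sum_add_distrib, sum_ite_eq', mem_univ, if_true, prod_const,
    card_univ, Fintype.card_fin]

lemma tApplyC_ofReal {m n : ℕ} (T : Tensor m n) (u : Fin n → ℝ) (i : Fin n) :
    tApplyC T (fun j => (u j : ℂ)) i = tApply T u i := by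
  simp [tApplyC, tApply]

lemma tApply_shiftT {m n : ℕ} (α : ℝ) (T : Tensor m n) (u : Fin n → ℝ) (i : Fin n) :
    tApply (shiftT α T) u i = α * u i ^ m + tApply T u i := by
  have h := tApplyC_shiftT α T (fun j => (u j : ℂ)) i
  rw [tApplyC_ofReal, tApplyC_ofReal] at h
  exact_mod_cast h

lemma isEig_shiftT_iff {m n : ℕ} (α : ℝ) (T : Tensor m n) (μ : ℂ) :
    IsEig (shiftT α T) μ ↔ IsEig T (μ - α) := by
  refine exists_congr fun x => and_congr_right fun _ => forall_congr' fun i => ?_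
  rw [tApplyC_shiftT]
  constructor <;> intro h <;> linear_combination h

lemma isEig_of_real {m n : ℕ} {T : Tensor m n} {lam : ℝ} {u : Fin n → ℝ} (hu : u ≠ 0)
    (h : ∀ i, tApply T u i = lam * u i ^ m) : IsEig T lam := by
  refine ⟨fun j => (u j : ℂ), fun h0 => hu (funext fun j => ?_), fun i => ?_⟩
  · simpa using congrFun h0 j
  · rw [tApplyC_ofReal, h i]
    push_cast
    rfl

lemma norm_tApplyC_le {m n : ℕ} (T : Tensor m n) {x : Fin n → ℂ} {M : ℝ}
    (hM : ∀ k, ‖x k‖ ≤ M) (i : Fin n) :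
    ‖tApplyC T x i‖ ≤ (∑ j : Fin m → Fin n, |T (Fin.cons i j)|) * M ^ m := by
  rw [tApplyC, sum_mul]
  refine (norm_sum_le _ _).trans (sum_le_sum fun j _ => ?_)
  rw [norm_mul, Complex.norm_real, Real.norm_eq_abs, norm_prod]
  gcongr
  calc ∏ k, ‖x (j k)‖ ≤ ∏ _k : Fin m, M :=
        prod_le_prod (fun _ _ => norm_nonneg _) fun k _ => hM (j k)
    _ = M ^ m := by simp

/-- Evaluating the eigen-equation at a coordinate of maximal modulus. -/
lemma IsEig.norm_le {m n : ℕ} {T : Tensor m n} {μ : ℂ} (h : IsEig T μ) :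
    ‖μ‖ ≤ ∑ i, ∑ j : Fin m → Fin n, |T (Fin.cons i j)| := by
  obtain ⟨x, hx, heq⟩ := h
  obtain ⟨i₁, hi₁⟩ := Function.ne_iff.mp hx
  obtain ⟨i₀, -, hmax⟩ := exists_max_image univ (fun i => ‖x i‖) ⟨i₁, mem_univ _⟩
  have hpos : 0 < ‖x i₀‖ ^ m :=
    pow_pos ((norm_pos_iff.mpr hi₁).trans_le (hmax i₁ (mem_univ _))) m
  have hrow : ‖μ‖ ≤ ∑ j : Fin m → Fin n, |T (Fin.cons i₀ j)| := by
    refine le_of_mul_le_mul_right ?_ hpos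
    calc ‖μ‖ * ‖x i₀‖ ^ m = ‖tApplyC T x i₀‖ := by rw [heq, norm_mul, norm_pow]
      _ ≤ _ := norm_tApplyC_le T (fun k => hmax k (mem_univ _)) i₀
  exact hrow.trans <| single_le_sum (f := fun i => ∑ j : Fin m → Fin n, |T (Fin.cons i j)|)
    (fun _ _ => sum_nonneg fun _ _ => abs_nonneg _) (mem_univ i₀)

lemma IsEig.norm_le_specRad {m n : ℕ} {T : Tensor m n} {μ : ℂ} (h : IsEig T μ) :
    ‖μ‖ ≤ specRad T :=
  le_csSup ⟨_, fun _ ⟨_, hl, hr⟩ => hr ▸ hl.norm_le⟩ ⟨μ, h, rfl⟩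

lemma IsEig.re_le_specRad_shiftT_sub {m n : ℕ} {T : Tensor m n} {μ : ℂ} (h : IsEig T μ)
    (α : ℝ) : μ.re ≤ specRad (shiftT α T) - α := by
  have hshift : IsEig (shiftT α T) (μ + α) := by
    rwa [isEig_shiftT_iff, add_sub_cancel_right]
  have := (Complex.re_le_norm _).trans hshift.norm_le_specRad
  simp only [Complex.add_re, Complex.ofReal_re] at this
  linarith

lemma isEig_specRad_shiftT_sub {m n : ℕ} {T : Tensor m n} {α : ℝ} {u : Fin n → ℝ} (hu : u ≠ 0)
    (h : ∀ i, tApply (shiftT α T) u i = specRad (shiftT α T) * u i ^ m) :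
    IsEig T (specRad (shiftT α T) - α : ℝ) := by
  push_cast
  exact (isEig_shiftT_iff α T _).mp (isEig_of_real hu h)

lemma TEssNonneg.tNonneg_shiftT_shiftAlpha {m n : ℕ} {T : Tensor m n} (hT : TEssNonneg T) :
    TNonneg (shiftT (shiftAlpha T) T) := by
  intro idx
  by_cases hdiag : ∀ k, idx k = idx 0
  · have hidx : idx = fun _ => idx 0 := funext hdiag
    have hle : |T (fun _ => idx 0)| ≤ ∑ i : Fin n, |T (fun _ => i)| :=
      single_le_sum (f := fun i : Fin n => |T (fun _ => i)|) (fun _ _ => abs_nonneg _)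
        (mem_univ (idx 0))
    rw [shiftT, unitT, if_pos hdiag, shiftAlpha, hidx]
    linarith [neg_abs_le (T (fun _ => idx 0))]
  · rw [shiftT, unitT, if_neg hdiag, mul_zero, zero_add]
    exact hT idx hdiag

/-- an essentially nonnegative tensor has a dominant eigenvalue. -/
theorem stmt6 {m n : ℕ} (A : Tensor m n) (hA : TEssNonneg A)
    (hPF : ∀ B : Tensor m n, TNonneg B → ∃ u : Fin n → ℝ, u ≠ 0 ∧ (∀ i, 0 ≤ u i) ∧
      ∀ i, tApply B u i = specRad B * (u i) ^ m) :
    ∃ lam : ℝ,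
      (∃ u : Fin n → ℝ, u ≠ 0 ∧ (∀ i, 0 ≤ u i) ∧
        ∀ i, tApply A u i = lam * (u i) ^ m) ∧
      (∀ μ : ℂ, IsEig A μ → μ.re ≤ lam) ∧
      (∀ α : ℝ, 0 < α → TNonneg (fun idx => α * unitT m n idx + A idx) →
        lam = specRad (fun idx => α * unitT m n idx + A idx) - α) := by
  set α₀ := shiftAlpha A
  obtain ⟨u, hu0, hu_nonneg, hu⟩ := hPF _ hA.tNonneg_shiftT_shiftAlpha
  refine ⟨specRad (shiftT α₀ A) - α₀, ⟨u, hu0, hu_nonneg, fun i => ?_⟩,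
    fun μ hμ => hμ.re_le_specRad_shiftT_sub α₀, fun α _ hC => ?_⟩
  · have hui := hu i
    rw [tApply_shiftT] at hui
    linarith
  · obtain ⟨v, hv0, -, hv⟩ := hPF (shiftT α A) hC
    have hle₀ := (isEig_specRad_shiftT_sub hu0 hu).re_le_specRad_shiftT_sub α
    have hle := (isEig_specRad_shiftT_sub hv0 hv).re_le_specRad_shiftT_sub α₀
    rw [Complex.ofReal_re] at hle₀ hle
    exact le_antisymm hle₀ hle
end

section
/- Let A be an irreducible nonnegative tensor of order m and dimension n, and let C, D be nonnegative diagonal tensors. Then for every t ∈ [0,1], ρ(A + tC + (1−t)D) ≤ t·ρ(A + C) + (1−t)·ρ(A + D), i.e., the spectral radius is a convex function of the diagonal entries. -/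
open Finset

/-!
Let `x`, `y` be Perron vectors of `A + C` and `A + D`, and test the Collatz bound for
`A + tC + (1-t)D` on their componentwise weighted geometric mean `z = x^t y^(1-t)`.
Each term `∏ₖ z_{jₖ} / z_i^m` of `(A z^{m-1})_i / z_i^m` is the weighted geometric mean of the
corresponding terms for `x` and `y`, so by weighted AM-GM the ratio for `z` is at most the
convex combination of the ratios for `x` and `y`, which are `ρ(A+C) - C_{i…i}` and
`ρ(A+D) - D_{i…i}`. The diagonal parts contribute exactly `t C_{i…i} + (1-t) D_{i…i}`.
-/

variable {m n : ℕ}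

lemma tApply_add (A B : Tensor m n) (z : Fin n → ℝ) (i : Fin n) :
    tApply (fun idx => A idx + B idx) z i = tApply A z i + tApply B z i := by
  simp only [tApply, add_mul, sum_add_distrib]

lemma tApply_const_mul (c : ℝ) (A : Tensor m n) (z : Fin n → ℝ) (i : Fin n) :
    tApply (fun idx => c * A idx) z i = c * tApply A z i := by
  simp only [tApply, mul_sum, mul_assoc]

lemma tApply_div_eq_sum (A : Tensor m n) (z : Fin n → ℝ) (i : Fin n) (c : ℝ) :
    tApply A z i / c = ∑ j : Fin m → Fin n, A (Fin.cons i j) * ((∏ k, z (j k)) / c) := by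
  simp only [tApply, sum_div, mul_div_assoc]

lemma TDiagonal.tApply_eq {C : Tensor m n} (hC : TDiagonal C) (z : Fin n → ℝ) (i : Fin n) :
    tApply C z i = C (fun _ => i) * z i ^ m := by
  have hconst : (Fin.cons i (fun _ => i) : Fin (m + 1) → Fin n) = fun _ => i := by
    funext k
    exact Fin.cases rfl (fun _ => rfl) k
  rw [tApply, sum_eq_single (fun _ => i), hconst, prod_const, card_univ, Fintype.card_fin]
  · intro j _ hj
    refine mul_eq_zero_of_left (hC _ fun hall => hj (funext fun k => ?_)) _
    simpa using hall k.succ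
  · exact fun h => absurd (mem_univ _) h

lemma TIrreducible.add_of_nonneg {A E : Tensor m n} (hirr : TIrreducible A) (hA : TNonneg A)
    (hE : TNonneg E) : TIrreducible (fun idx => A idx + E idx) := by
  rintro ⟨S, hne, hS, hzero⟩
  refine hirr ⟨S, hne, hS, fun i hi j hj => ?_⟩
  have hsum : A (Fin.cons i j) + E (Fin.cons i j) = 0 := hzero i hi j hj
  linarith [hA (Fin.cons i j), hE (Fin.cons i j)]

lemma tApply_div_pow_eq_of_add_diagonal {A C : Tensor m n} (hC : TDiagonal C)
    {x : Fin n → ℝ} (hx : ∀ i, 0 < x i) {r : ℝ}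
    (hev : ∀ i, tApply (fun idx => A idx + C idx) x i = r * x i ^ m) (i : Fin n) :
    tApply A x i / x i ^ m = r - C (fun _ => i) := by
  have h := hev i
  rw [tApply_add, hC.tApply_eq] at h
  rw [div_eq_iff (pow_pos (hx i) m).ne']
  linarith

lemma prod_rpow_mul_rpow_div {ι : Type*} (s : Finset ι) {p q : ι → ℝ} (hp : ∀ k, 0 ≤ p k)
    (hq : ∀ k, 0 ≤ q k) {a b : ℝ} (ha : 0 ≤ a) (hb : 0 ≤ b) (u v : ℝ) :
    (∏ k ∈ s, p k ^ u * q k ^ v) / (a ^ u * b ^ v) =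
      ((∏ k ∈ s, p k) / a) ^ u * ((∏ k ∈ s, q k) / b) ^ v := by
  rw [prod_mul_distrib, Real.finsetProd_rpow _ _ (fun k _ => hp k),
    Real.finsetProd_rpow _ _ (fun k _ => hq k), mul_div_mul_comm,
    Real.div_rpow (prod_nonneg fun k _ => hp k) ha,
    Real.div_rpow (prod_nonneg fun k _ => hq k) hb]

theorem tApply_geomMean_div_le {A : Tensor m n} (hA : TNonneg A) {x y : Fin n → ℝ}
    (hx : ∀ i, 0 < x i) (hy : ∀ i, 0 < y i) {t : ℝ} (ht0 : 0 ≤ t) (ht1 : t ≤ 1) (i : Fin n) :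
    tApply A (fun i => x i ^ t * y i ^ (1 - t)) i / (x i ^ t * y i ^ (1 - t)) ^ m ≤
      t * (tApply A x i / x i ^ m) + (1 - t) * (tApply A y i / y i ^ m) := by
  have hterm : ∀ j : Fin m → Fin n,
      (∏ k, x (j k) ^ t * y (j k) ^ (1 - t)) / (x i ^ t * y i ^ (1 - t)) ^ m ≤
        t * ((∏ k, x (j k)) / x i ^ m) + (1 - t) * ((∏ k, y (j k)) / y i ^ m) := by
    intro j
    have hx' : ∀ k, 0 ≤ x (j k) := fun k => (hx _).le
    have hy' : ∀ k, 0 ≤ y (j k) := fun k => (hy _).le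
    rw [mul_pow, Real.rpow_pow_comm (hx i).le, Real.rpow_pow_comm (hy i).le,
      prod_rpow_mul_rpow_div _ hx' hy' (pow_pos (hx i) m).le (pow_pos (hy i) m).le]
    exact Real.geom_mean_le_arith_mean2_weighted ht0 (sub_nonneg.2 ht1)
      (div_nonneg (prod_nonneg fun k _ => hx' k) (pow_pos (hx i) m).le)
      (div_nonneg (prod_nonneg fun k _ => hy' k) (pow_pos (hy i) m).le) (by ring)
  calc _ = ∑ j : Fin m → Fin n, A (Fin.cons i j) *
        ((∏ k, x (j k) ^ t * y (j k) ^ (1 - t)) / (x i ^ t * y i ^ (1 - t)) ^ m) := by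
        rw [tApply_div_eq_sum]
    _ ≤ ∑ j : Fin m → Fin n, A (Fin.cons i j) *
        (t * ((∏ k, x (j k)) / x i ^ m) + (1 - t) * ((∏ k, y (j k)) / y i ^ m)) :=
        sum_le_sum fun j _ => mul_le_mul_of_nonneg_left (hterm j) (hA _)
    _ = _ := by
      rw [tApply_div_eq_sum, tApply_div_eq_sum, mul_sum, mul_sum, ← sum_add_distrib]
      exact sum_congr rfl fun j _ => by ring

/-- convexity of the spectral radius in the diagonal entries. -/
theorem stmt8 {m n : ℕ} (hn : 0 < n) (A C D : Tensor m n)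
    (hA : TNonneg A) (hirr : TIrreducible A)
    (hC : TDiagonal C) (hCnn : TNonneg C)
    (hD : TDiagonal D) (hDnn : TNonneg D)
    (hPF : ∀ B : Tensor m n, TNonneg B → TIrreducible B →
      ∃ x : Fin n → ℝ, (∀ i, 0 < x i) ∧ 0 < specRad B ∧
        ∀ i, tApply B x i = specRad B * (x i) ^ m)
    (hCollatz : ∀ B : Tensor m n, TNonneg B → ∀ z : Fin n → ℝ, (∀ i, 0 < z i) →
      specRad B ≤ Finset.univ.sup' (Finset.univ_nonempty_iff.mpr ⟨⟨0, hn⟩⟩)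
        (fun i => tApply B z i / (z i) ^ m))
    (t : ℝ) (ht : t ∈ Set.Icc (0 : ℝ) 1) :
    specRad (fun idx => A idx + t * C idx + (1 - t) * D idx) ≤
      t * specRad (fun idx => A idx + C idx) +
        (1 - t) * specRad (fun idx => A idx + D idx) := by
  obtain ⟨ht0, ht1⟩ := ht
  obtain ⟨x, hx, -, hevx⟩ := hPF _ (fun idx => add_nonneg (hA idx) (hCnn idx))
    (hirr.add_of_nonneg hA hCnn)
  obtain ⟨y, hy, -, hevy⟩ := hPF _ (fun idx => add_nonneg (hA idx) (hDnn idx))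
    (hirr.add_of_nonneg hA hDnn)
  have hz : ∀ i, 0 < x i ^ t * y i ^ (1 - t) := fun i =>
    mul_pos (Real.rpow_pos_of_pos (hx i) t) (Real.rpow_pos_of_pos (hy i) (1 - t))
  have hB : TNonneg (fun idx => A idx + t * C idx + (1 - t) * D idx) := fun idx =>
    add_nonneg (add_nonneg (hA idx) (mul_nonneg ht0 (hCnn idx)))
      (mul_nonneg (sub_nonneg.2 ht1) (hDnn idx))
  refine (hCollatz _ hB _ hz).trans (sup'_le _ _ fun i _ => ?_)
  have hAz := tApply_geomMean_div_le hA hx hy ht0 ht1 i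
  rw [tApply_div_pow_eq_of_add_diagonal hC hx hevx,
    tApply_div_pow_eq_of_add_diagonal hD hy hevy] at hAz
  have hzm := (pow_pos (hz i) m).ne'
  rw [tApply_add, tApply_add, tApply_const_mul, tApply_const_mul, hC.tApply_eq, hD.tApply_eq,
    add_div, add_div]
  simp only [mul_div_assoc, div_self hzm, mul_one]
  linarith
end

section
/- Let x, y ∈ R^n be strictly positive vectors, let A be a nonnegative tensor of order m and dimension n, and let t ∈ [0,1]. Define z by z_i = x_i^t y_i^{1−t}. Then for each index i, (A z^{m-1})_i / z_i^{m-1} ≤ ((A x^{m-1})_i / x_i^{m-1})^t · ((A y^{m-1})_i / y_i^{m-1})^{1−t}. -/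
open Finset

/-! Each entry of `A z^{m-1}` is a sum of products `a * ∏ z_k`. Since `a = a^t a^{1-t}` and
`z_k = x_k^t y_k^{1-t}`, each summand is the geometric interpolation of the corresponding summands
of `A x^{m-1}` and `A y^{m-1}`, and Hölder's inequality with exponents `1/t`, `1/(1-t)` bounds the
sum. The denominators `z_i^m` interpolate exactly. -/

namespace Real

theorem sum_rpow_mul_rpow_one_sub_le {ι : Type*} (s : Finset ι) {f g : ι → ℝ}
    (hf : ∀ i ∈ s, 0 ≤ f i) (hg : ∀ i ∈ s, 0 ≤ g i) {t : ℝ} (ht₀ : 0 ≤ t) (ht₁ : t ≤ 1) :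
    ∑ i ∈ s, f i ^ t * g i ^ (1 - t) ≤ (∑ i ∈ s, f i) ^ t * (∑ i ∈ s, g i) ^ (1 - t) := by
  rcases ht₀.eq_or_lt with rfl | ht₀
  · simp
  rcases ht₁.eq_or_lt with rfl | ht₁
  · simp
  have hpq := HolderConjugate.inv_one_sub_inv ht₀ ht₁
  have hHolder := inner_le_Lp_mul_Lq_of_nonneg s hpq (f := fun i => f i ^ t)
    (g := fun i => g i ^ (1 - t)) (fun i hi => rpow_nonneg (hf i hi) t)
    (fun i hi => rpow_nonneg (hg i hi) (1 - t))
  have hf' : ∀ i ∈ s, (f i ^ t) ^ t⁻¹ = f i := fun i hi => by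
    rw [← rpow_mul (hf i hi), mul_inv_cancel₀ ht₀.ne', rpow_one]
  have hg' : ∀ i ∈ s, (g i ^ (1 - t)) ^ (1 - t)⁻¹ = g i := fun i hi => by
    rw [← rpow_mul (hg i hi), mul_inv_cancel₀ (sub_pos.2 ht₁).ne', rpow_one]
  simpa only [sum_congr rfl hf', sum_congr rfl hg', one_div, inv_inv] using hHolder

theorem mul_rpow_mul_rpow_one_sub {a p q : ℝ} (ha : 0 ≤ a) (hp : 0 ≤ p) (hq : 0 ≤ q) (t : ℝ) :
    a * (p ^ t * q ^ (1 - t)) = (a * p) ^ t * (a * q) ^ (1 - t) := by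
  have ha' : a ^ t * a ^ (1 - t) = a := by
    rw [← rpow_add' ha (by norm_num), add_sub_cancel, rpow_one]
  rw [mul_rpow ha hp, mul_rpow ha hq]
  nth_rw 1 [← ha']
  ring

theorem prod_rpow_mul_rpow_one_sub {ι : Type*} (s : Finset ι) {f g : ι → ℝ}
    (hf : ∀ i ∈ s, 0 ≤ f i) (hg : ∀ i ∈ s, 0 ≤ g i) (t : ℝ) :
    ∏ i ∈ s, f i ^ t * g i ^ (1 - t) = (∏ i ∈ s, f i) ^ t * (∏ i ∈ s, g i) ^ (1 - t) := by
  rw [prod_mul_distrib, finsetProd_rpow s f hf, finsetProd_rpow s g hg]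

end Real

open Real

section Tensor

variable {m n : ℕ} {A : Tensor m n}

theorem tApply_nonneg (hA : TNonneg A) {x : Fin n → ℝ} (hx : ∀ k, 0 ≤ x k) (i : Fin n) :
    0 ≤ tApply A x i :=
  sum_nonneg fun _ _ => mul_nonneg (hA _) (prod_nonneg fun _ _ => hx _)

theorem tApply_rpow_mul_rpow_one_sub_le (hA : TNonneg A) {x y : Fin n → ℝ}
    (hx : ∀ k, 0 ≤ x k) (hy : ∀ k, 0 ≤ y k) {t : ℝ} (ht₀ : 0 ≤ t) (ht₁ : t ≤ 1) (i : Fin n) :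
    tApply A (fun k => x k ^ t * y k ^ (1 - t)) i ≤ tApply A x i ^ t * tApply A y i ^ (1 - t) := by
  have hsummand : ∀ j : Fin m → Fin n,
      A (Fin.cons i j) * ∏ k, (x (j k) ^ t * y (j k) ^ (1 - t)) =
        (A (Fin.cons i j) * ∏ k, x (j k)) ^ t * (A (Fin.cons i j) * ∏ k, y (j k)) ^ (1 - t) :=
    fun j => by
      rw [prod_rpow_mul_rpow_one_sub _ (fun k _ => hx _) (fun k _ => hy _),
        mul_rpow_mul_rpow_one_sub (hA _) (prod_nonneg fun k _ => hx _)
          (prod_nonneg fun k _ => hy _)]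
  unfold tApply
  rw [sum_congr rfl fun j _ => hsummand j]
  exact sum_rpow_mul_rpow_one_sub_le _
    (fun j _ => mul_nonneg (hA _) (prod_nonneg fun k _ => hx _))
    (fun j _ => mul_nonneg (hA _) (prod_nonneg fun k _ => hy _)) ht₀ ht₁

end Tensor

/-- Hölder inequality for the Collatz quotients. -/
theorem stmt9 {m n : ℕ} (A : Tensor m n) (hA : TNonneg A)
    (x y : Fin n → ℝ) (hx : ∀ i, 0 < x i) (hy : ∀ i, 0 < y i)
    (t : ℝ) (ht : t ∈ Set.Icc (0 : ℝ) 1)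
    (z : Fin n → ℝ) (hz : ∀ i, z i = x i ^ t * y i ^ (1 - t)) :
    ∀ i, tApply A z i / (z i) ^ m ≤
      (tApply A x i / (x i) ^ m) ^ t * (tApply A y i / (y i) ^ m) ^ (1 - t) := by
  obtain ⟨ht₀, ht₁⟩ := ht
  obtain rfl : z = fun k => x k ^ t * y k ^ (1 - t) := funext hz
  intro i
  have hx₀ : ∀ k, 0 ≤ x k := fun k => (hx k).le
  have hy₀ : ∀ k, 0 ≤ y k := fun k => (hy k).le
  have hden : (x i ^ t * y i ^ (1 - t)) ^ m = (x i ^ m) ^ t * (y i ^ m) ^ (1 - t) := by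
    rw [mul_pow, rpow_pow_comm (hx₀ i), rpow_pow_comm (hy₀ i)]
  rw [div_rpow (tApply_nonneg hA hx₀ i) (pow_nonneg (hx₀ i) m),
    div_rpow (tApply_nonneg hA hy₀ i) (pow_nonneg (hy₀ i) m), div_mul_div_comm, ← hden]
  gcongr
  · exact pow_nonneg (mul_nonneg (rpow_nonneg (hx₀ i) t) (rpow_nonneg (hy₀ i) _)) m
  · exact tApply_rpow_mul_rpow_one_sub_le hA hx₀ hy₀ ht₀ ht₁ i
end

section
/- Let A and B be symmetric essentially nonnegative tensors of even order m and dimension n, and t ∈ [0,1]. Assume that for any symmetric nonnegative tensor W, its spectral radius satisfies the variational formula ρ(W) = max{ W x^m : Σ_{i=1}^n x_i^m = 1, x ≥ 0 }, where W x^m = Σ_{i_1,...,i_m} W_{i_1...i_m} x_{i_1}⋯x_{i_m}, and that ρ(W + kI) = ρ(W) + k for k ≥ 0. Then λ(tA + (1−t)B) ≤ t·λ(A) + (1−t)·λ(B), i.e., the dominant eigenvalue is convex on the cone of symmetric essentially nonnegative tensors. -/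
open Finset

/-!
Shifting by a common multiple `k` of the unit tensor, `λ(T) = ρ(T + kI) - k` for every essentially
nonnegative `T` with large enough `k`, and `C + kI = t(A + kI) + (1 - t)(B + kI)` for
`C = tA + (1 - t)B`. By the variational formula `ρ(W)` is the supremum of the form `W x^m` over the
nonnegative part of the unit `ℓ^m`-sphere; this form is linear in `W`, and a supremum of a sum is
at most the sum of the suprema.
-/

section Tensor

variable {m n : ℕ}

lemma unitT_symmetric : TSymmetric (unitT m n) := by
  intro σ idx
  refine if_congr ⟨fun h k => ?_, fun h k => (h (σ k)).trans (h (σ 0)).symm⟩ rfl rfl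
  have h' : ∀ k, idx k = idx (σ 0) := fun k => by simpa using h (σ.symm k)
  rw [h' k, h' 0]

lemma TSymmetric.add {T S : Tensor m n} (hT : TSymmetric T) (hS : TSymmetric S) :
    TSymmetric (T + S) := fun σ idx => by
  simp only [Pi.add_apply, hT σ idx, hS σ idx]

lemma TSymmetric.smul {T : Tensor m n} (hT : TSymmetric T) (c : ℝ) : TSymmetric (c • T) :=
  fun σ idx => by simp only [Pi.smul_apply, hT σ idx]

lemma TNonneg.add {T S : Tensor m n} (hT : TNonneg T) (hS : TNonneg S) : TNonneg (T + S) :=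
  fun idx => add_nonneg (hT idx) (hS idx)

lemma TNonneg.smul {T : Tensor m n} (hT : TNonneg T) {c : ℝ} (hc : 0 ≤ c) : TNonneg (c • T) :=
  fun idx => mul_nonneg hc (hT idx)

lemma TEssNonneg.add {T S : Tensor m n} (hT : TEssNonneg T) (hS : TEssNonneg S) :
    TEssNonneg (T + S) :=
  fun idx h => add_nonneg (hT idx h) (hS idx h)

lemma TEssNonneg.smul {T : Tensor m n} (hT : TEssNonneg T) {c : ℝ} (hc : 0 ≤ c) :
    TEssNonneg (c • T) :=
  fun idx h => mul_nonneg hc (hT idx h)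

lemma TEssNonneg.nonneg_add_smul_unitT {T : Tensor m n} (hT : TEssNonneg T) {k : ℝ}
    (hk : shiftAlpha T ≤ k) : TNonneg (T + k • unitT m n) := by
  intro idx
  by_cases hdiag : ∀ j, idx j = idx 0
  · have hidx : idx = fun _ => idx 0 := funext hdiag
    have habs : |T (fun _ => idx 0)| ≤ ∑ i : Fin n, |T (fun _ => i)| :=
      single_le_sum (f := fun i => |T (fun _ => i)|) (fun i _ => abs_nonneg _) (mem_univ _)
    have hneg : -T idx ≤ |T (fun _ => idx 0)| := hidx ▸ neg_le_abs _
    simp only [Pi.add_apply, Pi.smul_apply, unitT, if_pos hdiag, smul_eq_mul, mul_one]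
    unfold shiftAlpha at hk
    linarith
  · simp only [Pi.add_apply, Pi.smul_apply, unitT, if_neg hdiag, smul_eq_mul, mul_zero,
      add_zero]
    exact hT idx hdiag

lemma domEig_eq_specRad_add_smul_unitT
    (hshift : ∀ W : Tensor m n, TNonneg W → ∀ k : ℝ, 0 ≤ k →
      specRad (fun idx => W idx + k * unitT m n idx) = specRad W + k)
    {T : Tensor m n} (hT : TEssNonneg T) {k : ℝ} (hk : shiftAlpha T ≤ k) :
    domEig T = specRad (T + k • unitT m n) - k := by
  have h := hshift _ (hT.nonneg_add_smul_unitT le_rfl) (k - shiftAlpha T) (sub_nonneg.2 hk)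
  have hsum : (fun idx => (T + shiftAlpha T • unitT m n) idx + (k - shiftAlpha T) * unitT m n idx)
      = T + k • unitT m n := by
    funext idx
    simp only [Pi.add_apply, Pi.smul_apply, smul_eq_mul]
    ring
  rw [hsum] at h
  change specRad (T + shiftAlpha T • unitT m n) - shiftAlpha T = _
  linarith

lemma tForm_add (T S : Tensor m n) (x : Fin n → ℝ) :
    tForm (T + S) x = tForm T x + tForm S x := by
  simp only [tForm, Pi.add_apply, add_mul, sum_add_distrib]

lemma tForm_smul (c : ℝ) (T : Tensor m n) (x : Fin n → ℝ) :
    tForm (c • T) x = c * tForm T x := by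
  simp only [tForm, Pi.smul_apply, smul_eq_mul, mul_sum, mul_assoc]

end Tensor

def nonnegSphere (p n : ℕ) : Set (Fin n → ℝ) :=
  {x | (∀ i, 0 ≤ x i) ∧ ∑ i, x i ^ p = 1}

lemma le_one_of_mem_nonnegSphere {p n : ℕ} (hp : p ≠ 0) {x : Fin n → ℝ}
    (hx : x ∈ nonnegSphere p n) (i : Fin n) : x i ≤ 1 := by
  rw [← pow_le_one_iff_of_nonneg (hx.1 i) hp, ← hx.2]
  exact single_le_sum (fun j _ => pow_nonneg (hx.1 j) p) (mem_univ i)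

lemma tForm_le_sum_abs {m n : ℕ} (W : Tensor m n) {x : Fin n → ℝ}
    (hx : x ∈ nonnegSphere (m + 1) n) : tForm W x ≤ ∑ idx, |W idx| := by
  refine sum_le_sum fun idx _ => ?_
  have hprod_nonneg : 0 ≤ ∏ j, x (idx j) := prod_nonneg fun j _ => hx.1 _
  have hprod_le_one : ∏ j, x (idx j) ≤ 1 :=
    prod_le_one (fun j _ => hx.1 _) fun j _ => le_one_of_mem_nonnegSphere m.succ_ne_zero hx _
  calc W idx * ∏ j, x (idx j) ≤ |W idx| * ∏ j, x (idx j) := by gcongr; exact le_abs_self _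
    _ ≤ |W idx| := mul_le_of_le_one_right (abs_nonneg _) hprod_le_one

lemma bddAbove_tForm_image {m n : ℕ} (W : Tensor m n) :
    BddAbove (tForm W '' nonnegSphere (m + 1) n) :=
  ⟨_, by rintro _ ⟨x, hx, rfl⟩; exact tForm_le_sum_abs W hx⟩

-- An empty `s` is allowed: both sides are then `0`, as `sSup ∅ = 0` in `ℝ`.
lemma sSup_image_le_add_of_le {X : Type*} {s : Set X} {f g h : X → ℝ} {a b : ℝ}
    (ha : 0 ≤ a) (hb : 0 ≤ b) (hg : BddAbove (g '' s)) (hh : BddAbove (h '' s))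
    (hf : ∀ x ∈ s, f x ≤ a * g x + b * h x) :
    sSup (f '' s) ≤ a * sSup (g '' s) + b * sSup (h '' s) := by
  rcases s.eq_empty_or_nonempty with rfl | hs
  · simp
  refine csSup_le (hs.image f) ?_
  rintro _ ⟨x, hx, rfl⟩
  calc f x ≤ a * g x + b * h x := hf x hx
    _ ≤ a * sSup (g '' s) + b * sSup (h '' s) := by
      gcongr
      · exact le_csSup hg (Set.mem_image_of_mem g hx)
      · exact le_csSup hh (Set.mem_image_of_mem h hx)

lemma specRad_add_le {m n : ℕ}
    (hvar : ∀ W : Tensor m n, TNonneg W → TSymmetric W →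
      specRad W = sSup {r : ℝ | ∃ x : Fin n → ℝ, (∀ i, 0 ≤ x i) ∧
        (∑ i, (x i) ^ (m + 1)) = 1 ∧ tForm W x = r})
    {X Y : Tensor m n} (hX : TNonneg X) (hXs : TSymmetric X) (hY : TNonneg Y)
    (hYs : TSymmetric Y) {a b : ℝ} (ha : 0 ≤ a) (hb : 0 ≤ b) :
    specRad (a • X + b • Y) ≤ a * specRad X + b * specRad Y := by
  have hsup : ∀ W : Tensor m n, TNonneg W → TSymmetric W →
      specRad W = sSup (tForm W '' nonnegSphere (m + 1) n) := fun W hW hWs => by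
    rw [hvar W hW hWs]
    congr 1
    ext r
    simp only [nonnegSphere, Set.mem_image, Set.mem_ofPred_eq, and_assoc]
  rw [hsup _ ((hX.smul ha).add (hY.smul hb)) ((hXs.smul a).add (hYs.smul b)),
    hsup X hX hXs, hsup Y hY hYs]
  refine sSup_image_le_add_of_le ha hb (bddAbove_tForm_image X) (bddAbove_tForm_image Y)
    fun x _ => ?_
  rw [tForm_add, tForm_smul, tForm_smul]

theorem stmt13_general {m n : ℕ} (A B : Tensor m n)
    (hAs : TSymmetric A) (hAe : TEssNonneg A)
    (hBs : TSymmetric B) (hBe : TEssNonneg B)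
    (hvar : ∀ W : Tensor m n, TNonneg W → TSymmetric W →
      specRad W = sSup {r : ℝ | ∃ x : Fin n → ℝ, (∀ i, 0 ≤ x i) ∧
        (∑ i, (x i) ^ (m + 1)) = 1 ∧ tForm W x = r})
    (hshift : ∀ W : Tensor m n, TNonneg W → ∀ k : ℝ, 0 ≤ k →
      specRad (fun idx => W idx + k * unitT m n idx) = specRad W + k)
    (t : ℝ) (ht : t ∈ Set.Icc (0 : ℝ) 1) :
    domEig (t • A + (1 - t) • B) ≤ t * domEig A + (1 - t) * domEig B := by
  obtain ⟨ht0, ht1⟩ := ht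
  have ht0' : 0 ≤ 1 - t := sub_nonneg.2 ht1
  set C := t • A + (1 - t) • B
  have hCe : TEssNonneg C := (hAe.smul ht0).add (hBe.smul ht0')
  set k := max (shiftAlpha A) (max (shiftAlpha B) (shiftAlpha C))
  have hkA : shiftAlpha A ≤ k := le_max_left _ _
  have hkB : shiftAlpha B ≤ k := (le_max_left _ _).trans (le_max_right _ _)
  have hkC : shiftAlpha C ≤ k := (le_max_right _ _).trans (le_max_right _ _)
  have hCk : C + k • unitT m n = t • (A + k • unitT m n) + (1 - t) • (B + k • unitT m n) := by
    simp only [C, smul_add, smul_smul]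
    module
  have hconv := specRad_add_le hvar (hAe.nonneg_add_smul_unitT hkA)
    (hAs.add (unitT_symmetric.smul k)) (hBe.nonneg_add_smul_unitT hkB)
    (hBs.add (unitT_symmetric.smul k)) ht0 ht0'
  rw [domEig_eq_specRad_add_smul_unitT hshift hAe hkA,
    domEig_eq_specRad_add_smul_unitT hshift hBe hkB,
    domEig_eq_specRad_add_smul_unitT hshift hCe hkC, hCk]
  linarith

/-- convexity of the dominant eigenvalue on the cone of symmetric
essentially nonnegative tensors of even order. -/
theorem stmt13 {m n : ℕ} (hm : Even (m + 1)) (A B : Tensor m n)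
    (hAs : TSymmetric A) (hAe : TEssNonneg A)
    (hBs : TSymmetric B) (hBe : TEssNonneg B)
    (hvar : ∀ W : Tensor m n, TNonneg W → TSymmetric W →
      specRad W = sSup {r : ℝ | ∃ x : Fin n → ℝ, (∀ i, 0 ≤ x i) ∧
        (∑ i, (x i) ^ (m + 1)) = 1 ∧ tForm W x = r})
    (hshift : ∀ W : Tensor m n, TNonneg W → ∀ k : ℝ, 0 ≤ k →
      specRad (fun idx => W idx + k * unitT m n idx) = specRad W + k)
    (t : ℝ) (ht : t ∈ Set.Icc (0 : ℝ) 1) :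
    domEig (t • A + (1 - t) • B) ≤ t * domEig A + (1 - t) * domEig B :=
  stmt13_general A B hAs hAe hBs hBe hvar hshift t ht
end

section
/- Let A be a nonnegative tensor of order m and dimension n and x a strictly positive vector in R^n. Assume ρ(A) is an eigenvalue of A with a nonzero nonnegative eigenvector u (Perron-Frobenius for nonnegative tensors). Then ρ(A) ≤ max_{1≤i≤n} (A x^{m-1})_i / x_i^{m-1}. -/
open Finset

/- Take `i` maximizing `u i / x i` and put `t = u i / x i > 0`. Then `0 ≤ u ≤ t • x`,
so by monotonicity and `m`-homogeneity of `y ↦ A y^{m-1}` for nonnegative `A`,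
`ρ(A) t^m x_i^m = ρ(A) u_i^m = (A u^{m-1})_i ≤ t^m (A x^{m-1})_i`; cancel `t^m`. -/

theorem tApply_mono {m n : ℕ} {T : Tensor m n} (hT : TNonneg T) {u v : Fin n → ℝ}
    (hu : 0 ≤ u) (huv : u ≤ v) (i : Fin n) : tApply T u i ≤ tApply T v i :=
  Finset.sum_le_sum fun j _ => mul_le_mul_of_nonneg_left
    (Finset.prod_le_prod (fun k _ => hu (j k)) fun k _ => huv (j k)) (hT _)

theorem tApply_smul {m n : ℕ} (T : Tensor m n) (c : ℝ) (x : Fin n → ℝ) (i : Fin n) :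
    tApply T (c • x) i = c ^ m * tApply T x i := by
  simp only [tApply, Pi.smul_apply, smul_eq_mul, Finset.prod_mul_distrib, Finset.prod_const,
    Finset.card_univ, Fintype.card_fin, Finset.mul_sum]
  exact Finset.sum_congr rfl fun _ _ => by ring

theorem exists_pos_le_smul_of_max_ratio {ι : Type*} [Fintype ι] {x u : ι → ℝ}
    (hx : ∀ i, 0 < x i) (hu : 0 ≤ u) (hu0 : u ≠ 0) :
    ∃ i, 0 < u i ∧ u ≤ (u i / x i) • x := by
  obtain ⟨j, hj⟩ : ∃ j, 0 < u j := by
    by_contra! h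
    exact hu0 (funext fun j => le_antisymm (h j) (hu j))
  obtain ⟨i, -, hi⟩ := Finset.exists_max_image Finset.univ (fun k => u k / x k) ⟨j, mem_univ j⟩
  refine ⟨i, ?_, fun k => ?_⟩
  · exact (div_pos_iff_of_pos_right (hx i)).mp ((div_pos hj (hx j)).trans_le (hi j (mem_univ j)))
  · simpa [← div_le_iff₀ (hx k)] using hi k (mem_univ k)

theorem exists_le_tApply_div_of_nonneg_eigenvector {m n : ℕ} {T : Tensor m n} (hT : TNonneg T)
    {x u : Fin n → ℝ} (hx : ∀ i, 0 < x i) (hu : 0 ≤ u) (hu0 : u ≠ 0) {r : ℝ}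
    (hue : ∀ i, tApply T u i = r * u i ^ m) :
    ∃ i, r ≤ tApply T x i / x i ^ m := by
  obtain ⟨i, hui, hle⟩ := exists_pos_le_smul_of_max_ratio hx hu hu0
  set t := u i / x i
  have ht : 0 < t ^ m := pow_pos (div_pos hui (hx i)) m
  have hui_eq : u i = t * x i := (div_mul_cancel₀ _ (hx i).ne').symm
  have hscaled : t ^ m * (r * x i ^ m) ≤ t ^ m * tApply T x i :=
    calc t ^ m * (r * x i ^ m) = tApply T u i := by rw [hue, hui_eq, mul_pow]; ring
      _ ≤ tApply T (t • x) i := tApply_mono hT hu hle i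
      _ = t ^ m * tApply T x i := tApply_smul T t x i
  exact ⟨i, (le_div_iff₀ (pow_pos (hx i) m)).mpr (le_of_mul_le_mul_left hscaled ht)⟩

/-- Collatz upper bound for the spectral radius. -/
theorem stmt18 {m n : ℕ} (hn : 0 < n) (A : Tensor m n) (hA : TNonneg A)
    (x : Fin n → ℝ) (hx : ∀ i, 0 < x i)
    (u : Fin n → ℝ) (hu0 : u ≠ 0) (hunn : ∀ i, 0 ≤ u i)
    (hue : ∀ i, tApply A u i = specRad A * (u i) ^ m) :
    specRad A ≤ Finset.univ.sup' (Finset.univ_nonempty_iff.mpr ⟨⟨0, hn⟩⟩)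
      (fun i => tApply A x i / (x i) ^ m) := by
  obtain ⟨i, hi⟩ := exists_le_tApply_div_of_nonneg_eigenvector hA hx hunn hu0 hue
  exact hi.trans (Finset.le_sup' (fun i => tApply A x i / x i ^ m) (mem_univ i))
end
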